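/- arXiv:2410.04758 — 5 statements merged into one kernel-verified Lean document; each statement's English description precedes it below -/
import Mathlib

section
/- Fix Λ < 0 and r_+ > 0. For M ∈ ℝ define e²(M) := 2Mr_+ − r_+² − (−Λ/3)r_+⁴, so that the function Ω²_M(r) := 1 − 2M/r + e²(M)/r² + (−Λ/3)r² satisfies Ω²_M(r_+) = 0. Then the two conditions e²(M) ≥ 0 and (d/dr)Ω²_M(r_+) > 0 hold simultaneously if and only if M_{e=0} ≤ M < M_0, where M_{e=0} := (r_+/2)(1 + (−Λ/3)r_+²) and M_0 := r_+(1 + 2(−Λ/3)r_+²). Moreover, in this case Ω²_M(r) > 0 for all r > r_+, i.e. r_+ is the largest positive root of Ω²_M. -/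
/-!
With `k = -Λ/3 > 0` and `e² = 2M r₊ - r₊² - k r₊⁴`, the numerator `r² Ω²(r) = k r⁴ + r² - 2M r + e²`
vanishes at `r₊` and factors as `(r - r₊) (k (r³ + r² r₊ + r r₊² + r₊³) + r + r₊ - 2M)`.
The second factor is increasing in `r` and equals `r₊² (Ω²)'(r₊) = 2(M₀ - M)` at `r = r₊`,
so positive surface gravity forces `Ω² > 0` beyond `r₊`. The two inequalities `e² ≥ 0` and
`(Ω²)'(r₊) > 0` are linear in `M` and read `M ≥ M_{e=0}` and `M < M₀`.
-/

/-- `Ω²` with `k = -Λ/3` and charge squared `e`. -/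
noncomputable def rnPotential (k M e r : ℝ) : ℝ := 1 - 2*M/r + e/r^2 + k*r^2

section RNPotential

variable (k M e : ℝ)

theorem rnPotential_eq_div {r : ℝ} (hr : r ≠ 0) :
    rnPotential k M e r = (k*r^4 + r^2 - 2*M*r + e) / r^2 := by
  unfold rnPotential
  field_simp
  ring

theorem hasDerivAt_rnPotential {r : ℝ} (hr : r ≠ 0) :
    HasDerivAt (rnPotential k M e) (2*M/r^2 - 2*e/r^3 + 2*k*r) r := by
  have hsq : HasDerivAt (fun r : ℝ => r^2) (2*r) r := by simpa using hasDerivAt_pow 2 r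
  have hfun : rnPotential k M e = fun r => 1 - 2*M*r⁻¹ + e*(r^2)⁻¹ + k*r^2 := by
    funext r
    simp only [rnPotential, div_eq_mul_inv]
  rw [hfun]
  refine ((((hasDerivAt_const r (1:ℝ)).sub ((hasDerivAt_inv hr).const_mul (2*M))).add
    ((hsq.inv (pow_ne_zero 2 hr)).const_mul e)).add (hsq.const_mul k)).congr_deriv ?_
  field_simp
  ring

end RNPotential

section Horizon

variable (k M rp : ℝ)

/-- The charge squared for which `rp` is a root of `rnPotential k M _`. -/
def horizonCharge : ℝ := 2*M*rp - rp^2 - k*rp^4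

theorem rnPotential_horizonCharge_self (hrp : rp ≠ 0) :
    rnPotential k M (horizonCharge k M rp) rp = 0 := by
  rw [rnPotential_eq_div _ _ _ hrp, horizonCharge]
  ring

theorem deriv_rnPotential_horizonCharge_self (hrp : rp ≠ 0) :
    deriv (rnPotential k M (horizonCharge k M rp)) rp = 2*(rp*(1 + 2*k*rp^2) - M) / rp^2 := by
  rw [(hasDerivAt_rnPotential _ _ _ hrp).deriv, horizonCharge]
  field_simp
  ring

theorem horizonCharge_nonneg_iff (hrp : 0 < rp) :
    0 ≤ horizonCharge k M rp ↔ rp/2 * (1 + k*rp^2) ≤ M := by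
  have h : horizonCharge k M rp = 2*rp*(M - rp/2 * (1 + k*rp^2)) := by
    rw [horizonCharge]
    ring
  rw [h, mul_nonneg_iff_of_pos_left (by positivity), sub_nonneg]

theorem deriv_rnPotential_horizonCharge_self_pos_iff (hrp : rp ≠ 0) :
    0 < deriv (rnPotential k M (horizonCharge k M rp)) rp ↔ M < rp*(1 + 2*k*rp^2) := by
  rw [deriv_rnPotential_horizonCharge_self _ _ _ hrp, div_pos_iff_of_pos_right (by positivity)]
  constructor <;> intro h <;> linarith

theorem rnPotential_numerator_horizonCharge (r : ℝ) :
    k*r^4 + r^2 - 2*M*r + horizonCharge k M rp =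
      (r - rp) * (k*(r^3 + r^2*rp + r*rp^2 + rp^3) + r + rp - 2*M) := by
  rw [horizonCharge]
  ring

theorem rnPotential_horizonCharge_pos {k : ℝ} (hk : 0 ≤ k) (hrp : 0 < rp)
    (hM : M < rp*(1 + 2*k*rp^2)) {r : ℝ} (hr : rp < r) :
    0 < rnPotential k M (horizonCharge k M rp) r := by
  have hr0 : 0 < r := hrp.trans hr
  rw [rnPotential_eq_div _ _ _ hr0.ne', rnPotential_numerator_horizonCharge]
  have hcube : 4*rp^3 ≤ r^3 + r^2*rp + r*rp^2 + rp^3 := by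
    have hsq : rp^2 ≤ r^2 := by gcongr
    have hcub : rp^3 ≤ r^3 := by gcongr
    nlinarith [mul_le_mul_of_nonneg_left hr.le (sq_nonneg rp), mul_le_mul_of_nonneg_left hsq hrp.le]
  have hfactor : 0 < k*(r^3 + r^2*rp + r*rp^2 + rp^3) + r + rp - 2*M := by
    nlinarith [mul_le_mul_of_nonneg_left hcube hk]
  exact div_pos (mul_pos (sub_pos.mpr hr) hfactor) (by positivity)

end Horizon

theorem stmt_0 (Λ rp : ℝ) (hΛ : Λ < 0) (hrp : 0 < rp)
    (e2 : ℝ → ℝ) (he2 : ∀ M, e2 M = 2*M*rp - rp^2 - (-Λ/3)*rp^4)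
    (Ω2 : ℝ → ℝ → ℝ)
    (hΩ2 : ∀ M r, Ω2 M r = 1 - 2*M/r + e2 M/r^2 + (-Λ/3)*r^2)
    (Me0 M0 : ℝ)
    (hMe0 : Me0 = rp/2 * (1 + (-Λ/3)*rp^2))
    (hM0 : M0 = rp * (1 + 2*(-Λ/3)*rp^2))
    (M : ℝ) :
    Ω2 M rp = 0 ∧
    ((0 ≤ e2 M ∧ 0 < deriv (Ω2 M) rp) ↔ (Me0 ≤ M ∧ M < M0)) ∧
    ((Me0 ≤ M ∧ M < M0) → ∀ r, rp < r → 0 < Ω2 M r) := by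
  have he : e2 M = horizonCharge (-Λ/3) M rp := he2 M
  have hΩ : Ω2 M = rnPotential (-Λ/3) M (horizonCharge (-Λ/3) M rp) := by
    funext r
    rw [hΩ2, he, rnPotential]
  rw [hΩ, he, hMe0, hM0, horizonCharge_nonneg_iff _ _ _ hrp,
    deriv_rnPotential_horizonCharge_self_pos_iff _ _ _ hrp.ne']
  refine ⟨rnPotential_horizonCharge_self _ _ _ hrp.ne', Iff.rfl, fun ⟨_, hM⟩ r hr => ?_⟩
  exact rnPotential_horizonCharge_pos _ _ (by linarith) hrp hM hr
end

section
/- Let Λ < 0 and M, e ∈ ℝ. Suppose the quartic P(r) := (−Λ/3)r⁴ + r² − 2Mr + e² has at least two distinct positive roots, and let r_+ be its largest positive root. Then P'(r_+) > 0; equivalently, the surface gravity K_+ := M/r_+² − e²/r_+³ + (−Λ/3)r_+ is strictly positive, and moreover P(r) > 0 for all r > r_+. -/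
/-!
Write `P r = a r⁴ + r² - 2 M r + c` with `a = -Λ/3 > 0`. Two distinct roots `t < s` of `P`
determine `M` and `c`, and force the factorisation
`P r = (r - s) (r - t) (a r² + a (s + t) r + a (s² + s t + t²) + 1)`, whose last factor is
positive for `r, s, t ≥ 0`. With `s = r_+` the largest positive root and `t` another positive
root, both `P` on `(r_+, ∞)` and `P'(r_+) = (r_+ - t) (3 a r_+² + 2 a r_+ t + a t² + 1)` are
positive, and `K_+ = P'(r_+) / (2 r_+²)`.
-/

open Real Set

def rnQuartic (a M c r : ℝ) : ℝ := a * r ^ 4 + r ^ 2 - 2 * M * r + c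

section RnQuartic

variable {a M c s t : ℝ}

theorem hasDerivAt_rnQuartic (r : ℝ) :
    HasDerivAt (rnQuartic a M c) (4 * a * r ^ 3 + 2 * r - 2 * M) r := by
  have h := ((((hasDerivAt_pow 4 r).const_mul a).add (hasDerivAt_pow 2 r)).sub
    ((hasDerivAt_id r).const_mul (2 * M))).add_const c
  exact h.congr_deriv (by norm_num; ring)

theorem two_mul_eq_of_rnQuartic_roots (hst : s ≠ t) (hs : rnQuartic a M c s = 0)
    (ht : rnQuartic a M c t = 0) : 2 * M = (s + t) * (a * (s ^ 2 + t ^ 2) + 1) := by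
  unfold rnQuartic at hs ht
  have h : (s - t) * ((s + t) * (a * (s ^ 2 + t ^ 2) + 1) - 2 * M) = 0 := by
    linear_combination hs - ht
  have := (mul_eq_zero.mp h).resolve_left (sub_ne_zero.mpr hst)
  linarith

theorem rnQuartic_eq_mul_of_roots (hst : s ≠ t) (hs : rnQuartic a M c s = 0)
    (ht : rnQuartic a M c t = 0) (r : ℝ) :
    rnQuartic a M c r =
      (r - s) * (r - t) * (a * r ^ 2 + a * (s + t) * r + a * (s ^ 2 + s * t + t ^ 2) + 1) := by
  have hM := two_mul_eq_of_rnQuartic_roots hst hs ht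
  unfold rnQuartic at hs ⊢
  linear_combination hs + (s - r) * hM

theorem rnQuartic_deriv_eq_mul_of_roots (hst : s ≠ t) (hs : rnQuartic a M c s = 0)
    (ht : rnQuartic a M c t = 0) :
    4 * a * s ^ 3 + 2 * s - 2 * M = (s - t) * (3 * a * s ^ 2 + 2 * a * s * t + a * t ^ 2 + 1) := by
  linear_combination -two_mul_eq_of_rnQuartic_roots hst hs ht

theorem rnQuartic_pos_of_roots (ha : 0 ≤ a) (ht0 : 0 ≤ t) (hts : t < s)
    (hs : rnQuartic a M c s = 0) (ht : rnQuartic a M c t = 0) {r : ℝ} (hr : s < r) :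
    0 < rnQuartic a M c r := by
  rw [rnQuartic_eq_mul_of_roots hts.ne' hs ht]
  have hq : 0 < a * r ^ 2 + a * (s + t) * r + a * (s ^ 2 + s * t + t ^ 2) + 1 := by
    have : 0 ≤ s := by linarith
    have : 0 ≤ r := by linarith
    positivity
  exact mul_pos (mul_pos (by linarith) (by linarith)) hq

theorem rnQuartic_deriv_pos_of_roots (ha : 0 ≤ a) (ht0 : 0 ≤ t) (hts : t < s)
    (hs : rnQuartic a M c s = 0) (ht : rnQuartic a M c t = 0) :
    0 < 4 * a * s ^ 3 + 2 * s - 2 * M := by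
  rw [rnQuartic_deriv_eq_mul_of_roots hts.ne' hs ht]
  have : 0 ≤ s := by linarith
  exact mul_pos (by linarith) (by positivity)

theorem surfaceGravity_eq_of_rnQuartic_root (hs0 : s ≠ 0) (hs : rnQuartic a M c s = 0) :
    M / s ^ 2 - c / s ^ 3 + a * s = (4 * a * s ^ 3 + 2 * s - 2 * M) / (2 * s ^ 2) := by
  unfold rnQuartic at hs
  field_simp
  linear_combination -2 * hs

end RnQuartic

theorem stmt_1 (Λ M e rp : ℝ) (hΛ : Λ < 0)
    (P : ℝ → ℝ) (hP : ∀ r, P r = (-Λ/3)*r^4 + r^2 - 2*M*r + e^2)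
    (hroots : ∃ r1 r2 : ℝ, 0 < r1 ∧ 0 < r2 ∧ r1 ≠ r2 ∧ P r1 = 0 ∧ P r2 = 0)
    (hrp_pos : 0 < rp) (hrp_root : P rp = 0)
    (hrp_max : ∀ r, 0 < r → P r = 0 → r ≤ rp) :
    0 < deriv P rp ∧ 0 < M/rp^2 - e^2/rp^3 + (-Λ/3)*rp ∧
    ∀ r, rp < r → 0 < P r := by
  have hPeq : P = rnQuartic (-Λ/3) M (e^2) := funext hP
  subst hPeq
  have ha : 0 ≤ -Λ/3 := by linarith
  obtain ⟨r0, hr0, hr0rp, hPr0⟩ : ∃ r0, 0 < r0 ∧ r0 < rp ∧ rnQuartic (-Λ/3) M (e^2) r0 = 0 := by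
    obtain ⟨r1, r2, hr1, hr2, hne, hP1, hP2⟩ := hroots
    by_cases h : r1 = rp
    · exact ⟨r2, hr2, (hrp_max r2 hr2 hP2).lt_of_ne (h ▸ hne.symm), hP2⟩
    · exact ⟨r1, hr1, (hrp_max r1 hr1 hP1).lt_of_ne h, hP1⟩
  have hderiv := rnQuartic_deriv_pos_of_roots ha hr0.le hr0rp hrp_root hPr0
  refine ⟨?_, ?_, fun r hr => rnQuartic_pos_of_roots ha hr0.le hr0rp hrp_root hPr0 hr⟩
  · rwa [(hasDerivAt_rnQuartic rp).deriv]
  · rw [surfaceGravity_eq_of_rnQuartic_root hrp_pos.ne' hrp_root]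
    positivity
end

section
/- Let r_+ > 0, Δ ∈ (0, 3/2), q₀ ∈ ℝ and L > 0. There exists C > 0 depending only on (r_+, Δ, q₀, L) with the following property: for any R ∈ (r_+, ∞], any ε > 0 and K > 0, and any functions κ ∈ C¹([r_+, R), (0,∞)), φ ∈ C¹([r_+, R)), h ∈ C⁰([r_+, R)) satisfying κ'(r) = κ(r)·(r·φ'(r)² + q₀²·r·κ(r)²·h(r)²·φ(r)²) for all r, together with the bounds 1 ≤ κ(r_+), κ(r) ≤ 2κ(r_+) ≤ 4, |φ(r)| ≤ Kε·r^{−3/2+Δ}, |φ'(r)| ≤ Kε·r^{−5/2+Δ} and |h(r)| ≤ L·r^{−2} for all r ∈ [r_+, R), the function κ is nondecreasing on [r_+, R) and κ(r_+) ≤ κ(r) ≤ κ(r_+)·exp(C·K²·ε²) for all r ∈ [r_+, R). -/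
/-
The right-hand side of the equation for `κ'/κ` is nonnegative, so `κ` is nondecreasing.
With `κ ≤ 4`, `|φ'| ≤ Kε r^(Δ-5/2)`, `|φ| ≤ r · Kε r^(Δ-5/2)` and `|h| ≤ L/r²` it is bounded
by `c K²ε² r^(2Δ-4)` with `c = 1 + 16 q₀² L² / r_+²`, which is integrable at infinity because
`Δ < 3/2`. Hence `log κ + c K²ε² r^(2Δ-3)/(3-2Δ)` is nonincreasing, and comparing its values at
`r_+` and `r` gives the upper bound with `C = c r_+^(2Δ-3)/(3-2Δ)`.
-/

open Real Set Filter

noncomputable section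

/-- The half-open domain `[r_+, R)`, where `R ∈ (r_+, ∞]` is encoded as an `EReal`. -/
def dom (rp : ℝ) (R : EReal) : Set ℝ := {r : ℝ | rp ≤ r ∧ (r : EReal) < R}

theorem convex_dom (rp : ℝ) (R : EReal) : Convex ℝ (dom rp R) := by
  refine OrdConnected.convex ⟨?_⟩
  rintro a ⟨ha, -⟩ b ⟨-, hb⟩ x ⟨hax, hxb⟩
  exact ⟨ha.trans hax, (EReal.coe_le_coe_iff.mpr hxb).trans_lt hb⟩

/-- Grönwall-type comparison: `log f + G` is nonincreasing when `f' + G' f ≤ 0`. -/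
theorem le_mul_exp_sub_of_hasDerivWithinAt {s : Set ℝ} (hs : Convex ℝ s) {f f' G G' : ℝ → ℝ}
    (hf : ∀ x ∈ s, HasDerivWithinAt f (f' x) s x) (hG : ∀ x ∈ s, HasDerivWithinAt G (G' x) s x)
    (hpos : ∀ x ∈ s, 0 < f x) (hle : ∀ x ∈ interior s, f' x + G' x * f x ≤ 0)
    {a b : ℝ} (ha : a ∈ s) (hb : b ∈ s) (hab : a ≤ b) : f b ≤ f a * exp (G a - G b) := by
  have hderiv : ∀ x ∈ s, HasDerivWithinAt (fun y => log (f y) + G y) (f' x / f x + G' x) s x :=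
    fun x hx => ((hf x hx).log (hpos x hx).ne').add (hG x hx)
  have hanti : AntitoneOn (fun y => log (f y) + G y) s := by
    refine antitoneOn_of_hasDerivWithinAt_nonpos hs
      (fun x hx => (hderiv x hx).continuousWithinAt)
      (fun x hx => (hderiv x (interior_subset hx)).mono interior_subset) fun x hx => ?_
    have hfx := hpos x (interior_subset hx)
    rw [div_add' _ _ _ hfx.ne']
    exact div_nonpos_of_nonpos_of_nonneg (hle x hx) hfx.le
  have hlog : log (f b) ≤ log (f a) + (G a - G b) := by linarith [hanti ha hb hab]
  calc f b = exp (log (f b)) := (exp_log (hpos b hb)).symm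
    _ ≤ exp (log (f a) + (G a - G b)) := exp_le_exp.mpr hlog
    _ = f a * exp (G a - G b) := by rw [exp_add, exp_log (hpos a ha)]

theorem mul_sq_add_sq_mul_sq_le {q L rp r κ h φ φd u : ℝ} (hrp : 0 < rp) (hr : rp ≤ r)
    (hκ₀ : 0 ≤ κ) (hκ : κ ≤ 4) (hφ : |φ| ≤ r * u) (hφd : |φd| ≤ u) (hh : |h| ≤ L / r ^ 2) :
    r * φd ^ 2 + q ^ 2 * r * κ ^ 2 * h ^ 2 * φ ^ 2
      ≤ (1 + 16 * q ^ 2 * L ^ 2 / rp ^ 2) * (r * u ^ 2) := by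
  have hr₀ : 0 < r := hrp.trans_le hr
  have hφd2 : φd ^ 2 ≤ u ^ 2 := sq_le_sq' (abs_le.mp hφd).1 (abs_le.mp hφd).2
  have hφ2 : φ ^ 2 ≤ (r * u) ^ 2 := sq_le_sq' (abs_le.mp hφ).1 (abs_le.mp hφ).2
  have hh2 : h ^ 2 ≤ (L / r ^ 2) ^ 2 := sq_le_sq' (abs_le.mp hh).1 (abs_le.mp hh).2
  have hκ2 : κ ^ 2 ≤ 4 ^ 2 := pow_le_pow_left₀ hκ₀ hκ 2
  have hprod : κ ^ 2 * h ^ 2 * φ ^ 2 ≤ 16 * L ^ 2 * u ^ 2 / rp ^ 2 :=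
    calc κ ^ 2 * h ^ 2 * φ ^ 2 ≤ 4 ^ 2 * (L / r ^ 2) ^ 2 * (r * u) ^ 2 := by gcongr
      _ = 16 * L ^ 2 * u ^ 2 / r ^ 2 := by field_simp; ring
      _ ≤ 16 * L ^ 2 * u ^ 2 / rp ^ 2 := by gcongr
  calc r * φd ^ 2 + q ^ 2 * r * κ ^ 2 * h ^ 2 * φ ^ 2
      = r * φd ^ 2 + q ^ 2 * r * (κ ^ 2 * h ^ 2 * φ ^ 2) := by ring
    _ ≤ r * u ^ 2 + q ^ 2 * r * (16 * L ^ 2 * u ^ 2 / rp ^ 2) := by gcongr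
    _ = (1 + 16 * q ^ 2 * L ^ 2 / rp ^ 2) * (r * u ^ 2) := by ring

theorem mul_sq_add_sq_mul_sq_le_rpow {q L rp r κ h φ φd A Δ : ℝ} (hrp : 0 < rp) (hr : rp ≤ r)
    (hκ₀ : 0 ≤ κ) (hκ : κ ≤ 4) (hφ : |φ| ≤ A * r ^ (-(3:ℝ)/2 + Δ))
    (hφd : |φd| ≤ A * r ^ (-(5:ℝ)/2 + Δ)) (hh : |h| ≤ L / r ^ 2) :
    r * φd ^ 2 + q ^ 2 * r * κ ^ 2 * h ^ 2 * φ ^ 2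
      ≤ (1 + 16 * q ^ 2 * L ^ 2 / rp ^ 2) * A ^ 2 * r ^ (2 * Δ - 4) := by
  have hr₀ : 0 < r := hrp.trans_le hr
  have hφ' : |φ| ≤ r * (A * r ^ (-(5:ℝ)/2 + Δ)) := by
    convert hφ using 1
    rw [show -(3:ℝ)/2 + Δ = (-(5:ℝ)/2 + Δ) + 1 by ring, rpow_add_one hr₀.ne']
    ring
  have hsq : r * (A * r ^ (-(5:ℝ)/2 + Δ)) ^ 2 = A ^ 2 * r ^ (2 * Δ - 4) := by
    rw [mul_pow, ← rpow_mul_natCast hr₀.le,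
      show 2 * Δ - 4 = (-(5:ℝ)/2 + Δ) * (2 : ℕ) + 1 by push_cast; ring, rpow_add_one hr₀.ne']
    ring
  calc r * φd ^ 2 + q ^ 2 * r * κ ^ 2 * h ^ 2 * φ ^ 2
      ≤ (1 + 16 * q ^ 2 * L ^ 2 / rp ^ 2) * (r * (A * r ^ (-(5:ℝ)/2 + Δ)) ^ 2) :=
        mul_sq_add_sq_mul_sq_le hrp hr hκ₀ hκ hφ' hφd hh
    _ = (1 + 16 * q ^ 2 * L ^ 2 / rp ^ 2) * A ^ 2 * r ^ (2 * Δ - 4) := by rw [hsq]; ring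

theorem le_mul_exp_of_hasDerivWithinAt_le_mul_rpow {s : Set ℝ} (hs : Convex ℝ s)
    (hs₀ : ∀ x ∈ s, 0 < x) {f f' : ℝ → ℝ} {M β : ℝ} (hM : 0 ≤ M) (hβ : β < 0)
    (hf : ∀ x ∈ s, HasDerivWithinAt f (f' x) s x) (hpos : ∀ x ∈ s, 0 < f x)
    (hle : ∀ x ∈ s, f' x ≤ M * x ^ (β - 1) * f x) {a b : ℝ} (ha : a ∈ s) (hb : b ∈ s)
    (hab : a ≤ b) : f b ≤ f a * exp (M / -β * a ^ β) := by
  have hG : ∀ x ∈ s, HasDerivWithinAt (fun y => M / -β * y ^ β) (-(M * x ^ (β - 1))) s x := by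
    intro x hx
    refine ((hasDerivAt_rpow_const (p := β) (Or.inl (hs₀ x hx).ne')).const_mul
      (M / -β)).hasDerivWithinAt.congr_deriv ?_
    field_simp [hβ.ne]
  calc f b ≤ f a * exp (M / -β * a ^ β - M / -β * b ^ β) :=
        le_mul_exp_sub_of_hasDerivWithinAt hs hf hG hpos
          (fun x hx => by linarith [hle x (interior_subset hx)]) ha hb hab
    _ ≤ f a * exp (M / -β * a ^ β) := by
        have := hpos a ha
        have : 0 ≤ M / -β * b ^ β := by have := hs₀ b hb; have := neg_pos.mpr hβ; positivity
        gcongr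
        linarith

theorem stmt_3_general (rp Δ q0 L : ℝ) (hrp : 0 < rp) (hΔ : Δ ∈ Ioo (0:ℝ) (3/2)) :
    ∃ C : ℝ, 0 < C ∧ ∀ (R : EReal), (rp : EReal) < R →
      ∀ (ε K : ℝ), 0 < ε → 0 < K →
      ∀ (κ κd φ φd h : ℝ → ℝ),
        (∀ r ∈ dom rp R, HasDerivWithinAt κ (κd r) (dom rp R) r) →
        ContinuousOn κd (dom rp R) →
        (∀ r ∈ dom rp R, HasDerivWithinAt φ (φd r) (dom rp R) r) →
        ContinuousOn φd (dom rp R) →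
        ContinuousOn h (dom rp R) →
        (∀ r ∈ dom rp R, 0 < κ r) →
        (∀ r ∈ dom rp R,
          κd r = κ r * (r * (φd r)^2 + q0^2 * r * (κ r)^2 * (h r)^2 * (φ r)^2)) →
        1 ≤ κ rp →
        (∀ r ∈ dom rp R, κ r ≤ 2 * κ rp) →
        κ rp ≤ 2 →
        (∀ r ∈ dom rp R, |φ r| ≤ K * ε * r ^ (-(3:ℝ)/2 + Δ)) →
        (∀ r ∈ dom rp R, |φd r| ≤ K * ε * r ^ (-(5:ℝ)/2 + Δ)) →
        (∀ r ∈ dom rp R, |h r| ≤ L / r^2) →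
        MonotoneOn κ (dom rp R) ∧
        ∀ r ∈ dom rp R, κ rp ≤ κ r ∧ κ r ≤ κ rp * Real.exp (C * K^2 * ε^2) := by
  have h32 : 0 < 3 - 2 * Δ := by linarith [hΔ.2]
  set c : ℝ := 1 + 16 * q0 ^ 2 * L ^ 2 / rp ^ 2
  refine ⟨c / (3 - 2 * Δ) * rp ^ (2 * Δ - 3), by positivity, ?_⟩
  intro R hR ε K _ _ κ κd φ φd h hκd _ _ _ _ hκpos hode _ hκle hκrp hφ hφd hh
  have hrp_mem : rp ∈ dom rp R := ⟨le_rfl, hR⟩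
  have hpos : ∀ r ∈ dom rp R, 0 < r := fun r hr => hrp.trans_le hr.1
  have hκd_nonneg : ∀ r ∈ dom rp R, 0 ≤ κd r := by
    intro r hr
    have := hpos r hr
    have := hκpos r hr
    rw [hode r hr]
    positivity
  have hκd_le : ∀ r ∈ dom rp R, κd r ≤ K ^ 2 * ε ^ 2 * c * r ^ (2 * Δ - 3 - 1) * κ r := by
    intro r hr
    have hrhs := mul_sq_add_sq_mul_sq_le_rpow (q := q0) hrp hr.1 (hκpos r hr).le
      (by linarith [hκle r hr]) (hφ r hr) (hφd r hr) (hh r hr)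
    rw [hode r hr, show 2 * Δ - 3 - 1 = 2 * Δ - 4 by ring, mul_comm (κ r)]
    gcongr
    · exact (hκpos r hr).le
    · linarith [hrhs]
  have hmono : MonotoneOn κ (dom rp R) := monotoneOn_of_hasDerivWithinAt_nonneg
    (convex_dom rp R) (fun r hr => (hκd r hr).continuousWithinAt)
    (fun r hr => (hκd r (interior_subset hr)).mono interior_subset)
    (fun r hr => hκd_nonneg r (interior_subset hr))
  refine ⟨hmono, fun r hr => ⟨hmono hrp_mem hr hr.1, ?_⟩⟩
  calc κ r ≤ κ rp * exp (K ^ 2 * ε ^ 2 * c / -(2 * Δ - 3) * rp ^ (2 * Δ - 3)) :=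
        le_mul_exp_of_hasDerivWithinAt_le_mul_rpow (convex_dom rp R) hpos (by positivity)
          (by linarith) hκd hκpos hκd_le hrp_mem hr hr.1
    _ = κ rp * exp (c / (3 - 2 * Δ) * rp ^ (2 * Δ - 3) * K ^ 2 * ε ^ 2) := by
        rw [neg_sub, mul_div_assoc]
        ac_rfl

theorem stmt_3 (rp Δ q0 L : ℝ) (hrp : 0 < rp) (hΔ : Δ ∈ Ioo (0:ℝ) (3/2)) (hL : 0 < L) :
    ∃ C : ℝ, 0 < C ∧ ∀ (R : EReal), (rp : EReal) < R →
      ∀ (ε K : ℝ), 0 < ε → 0 < K →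
      ∀ (κ κd φ φd h : ℝ → ℝ),
        (∀ r ∈ dom rp R, HasDerivWithinAt κ (κd r) (dom rp R) r) →
        ContinuousOn κd (dom rp R) →
        (∀ r ∈ dom rp R, HasDerivWithinAt φ (φd r) (dom rp R) r) →
        ContinuousOn φd (dom rp R) →
        ContinuousOn h (dom rp R) →
        (∀ r ∈ dom rp R, 0 < κ r) →
        (∀ r ∈ dom rp R,
          κd r = κ r * (r * (φd r)^2 + q0^2 * r * (κ r)^2 * (h r)^2 * (φ r)^2)) →
        1 ≤ κ rp →
        (∀ r ∈ dom rp R, κ r ≤ 2 * κ rp) →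
        κ rp ≤ 2 →
        (∀ r ∈ dom rp R, |φ r| ≤ K * ε * r ^ (-(3:ℝ)/2 + Δ)) →
        (∀ r ∈ dom rp R, |φd r| ≤ K * ε * r ^ (-(5:ℝ)/2 + Δ)) →
        (∀ r ∈ dom rp R, |h r| ≤ L / r^2) →
        MonotoneOn κ (dom rp R) ∧
        ∀ r ∈ dom rp R, κ rp ≤ κ r ∧ κ r ≤ κ rp * Real.exp (C * K^2 * ε^2) :=
  stmt_3_general rp Δ q0 L hrp hΔ
end
end

section
/- Let r_+ > 0, Λ < 0, α < 0, Δ ∈ (0, 3/2), q₀ ∈ ℝ and L > 0. There exists C > 0 depending only on (r_+, Λ, α, Δ, q₀, L) such that: for any R ∈ (r_+, ∞], ε > 0, K > 0 with K²ε² ≤ 1, M ∈ ℝ with |M| ≤ L, and functions ϖ ∈ C¹([r_+, R)), κ, φ ∈ C¹([r_+, R)), Q, h ∈ C⁰([r_+, R)) satisfying ϖ(r_+) = M and the transport equation ϖ'(r) = (−Λ/3)·α·r²φ(r)²/2 + (1 − 2ϖ(r)/r + Q(r)²/r² + (−Λ/3)r²)·(r²φ'(r)² + q₀²·h(r)²·κ(r)²·r²·φ(r)²)/2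 + q₀²·Q(r)·r·h(r)·κ(r)·φ(r)², together with the bounds 1 ≤ κ(r) ≤ 4, |Q(r)| ≤ L, |φ(r)| ≤ Kε·r^{−3/2+Δ}, |φ'(r)| ≤ Kε·r^{−5/2+Δ} and |h(r)| ≤ L·r^{−2} for all r ∈ [r_+, R), one has |ϖ(r) − M| ≤ C·K²·ε²·r^{2Δ−1}·(r − r_+) for all r ∈ [r_+, R). -/
/-! Writing `ψ = ϖ - M`, the transport equation reads `ψ' = S - g ψ`, where `S` is its right-hand
side evaluated at `ϖ = M` and `g = r (φ'² + q₀² h² κ² φ²) ≥ 0`. The damping term `-g ψ` only pulls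
`ψ` towards `0`, so `|ψ|` stays below the primitive, vanishing at `r_+`, of any bound for `|S|`.
The decay assumptions give `|S| ≤ c K² ε² r^(2Δ-1)`, hence
`|ψ(r)| ≤ c K² ε² (r^(2Δ) - r_+^(2Δ)) / (2Δ) ≤ max (2Δ) 1 / (2Δ) · c K² ε² r^(2Δ-1) (r - r_+)`. -/

open Real Set Filter

noncomputable section

theorem image_le_of_deriv_right_le_deriv_boundary_of_lt {f f' : ℝ → ℝ} {a b : ℝ}
    (hf : ContinuousOn f (Icc a b)) (hf' : ∀ x ∈ Ico a b, HasDerivWithinAt f (f' x) (Ici x) x)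
    {B B' : ℝ → ℝ} (ha : f a ≤ B a) (hB : ContinuousOn B (Icc a b))
    (hB' : ∀ x ∈ Ico a b, HasDerivWithinAt B (B' x) (Ici x) x)
    (bound : ∀ x ∈ Ico a b, B x < f x → f' x ≤ B' x) : ∀ ⦃x⦄, x ∈ Icc a b → f x ≤ B x := by
  -- the slack `η (1 + (x - a))` makes the bound strict wherever `f` meets the barrier
  have fence (η : ℝ) (hη : 0 < η) : ∀ ⦃x⦄, x ∈ Icc a b → f x ≤ B x + η * (1 + (x - a)) := by
    refine image_le_of_deriv_right_lt_deriv_boundary' hf hf'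
      (by simp only [sub_self, add_zero, mul_one]; linarith)
      (hB.add (by fun_prop)) (fun x hx => (hB' x hx).add
        ((((hasDerivWithinAt_id x _).sub_const a).const_add 1).const_mul η)) ?_
    intro x hx hfx
    have : 0 < η * (1 + (x - a)) := mul_pos hη (by linarith [hx.1])
    simpa using (bound x hx (by linarith)).trans_lt (lt_add_of_pos_right _ hη)
  intro x hx
  have hx1 : 0 < 1 + (x - a) := by linarith [hx.1]
  refine le_of_forall_pos_le_add fun ε hε => ?_
  simpa [div_mul_cancel₀ _ hx1.ne'] using fence (ε / (1 + (x - a))) (by positivity) hx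

theorem abs_image_le_of_damped_deriv_right {ψ ψ' T g B B' : ℝ → ℝ} {a b : ℝ}
    (hψ : ContinuousOn ψ (Icc a b)) (hψ' : ∀ x ∈ Ico a b, HasDerivWithinAt ψ (ψ' x) (Ici x) x)
    (hB : ContinuousOn B (Icc a b)) (hB' : ∀ x ∈ Ico a b, HasDerivWithinAt B (B' x) (Ici x) x)
    (ha : |ψ a| ≤ B a) (hψ'_eq : ∀ x ∈ Ico a b, ψ' x = T x - g x * ψ x)
    (hg : ∀ x ∈ Ico a b, 0 ≤ g x) (hT : ∀ x ∈ Ico a b, |T x| ≤ B' x) :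
    ∀ ⦃x⦄, x ∈ Icc a b → |ψ x| ≤ B x := by
  have hB_nonneg : ∀ ⦃x⦄, x ∈ Icc a b → 0 ≤ B x := fun x hx =>
    ((abs_nonneg _).trans ha).trans <| image_le_of_deriv_right_le_deriv_boundary
      continuousOn_const (fun x _ => hasDerivWithinAt_const x _ (B a)) le_rfl hB hB'
      (fun x hx => (abs_nonneg _).trans (hT x hx)) hx
  have upper := image_le_of_deriv_right_le_deriv_boundary_of_lt hψ hψ' (le_abs_self _ |>.trans ha)
    hB hB' fun x hx hlt => by
      have : 0 < ψ x := (hB_nonneg (Ico_subset_Icc_self hx)).trans_lt hlt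
      nlinarith [hψ'_eq x hx, hg x hx, le_abs_self (T x), hT x hx]
  have lower := image_le_of_deriv_right_le_deriv_boundary_of_lt (f := fun x => -ψ x) hψ.neg
    (fun x hx => (hψ' x hx).neg) (neg_le_abs _ |>.trans ha) hB hB' fun x hx hlt => by
      have : ψ x < 0 := by linarith [hB_nonneg (Ico_subset_Icc_self hx)]
      nlinarith [hψ'_eq x hx, hg x hx, neg_abs_le (T x), hT x hx]
  exact fun x hx => abs_le.2 ⟨by linarith [lower hx], upper hx⟩

theorem rpow_sub_rpow_le_max_mul {p a b : ℝ} (ha : 0 < a) (hab : a ≤ b) :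
    b ^ p - a ^ p ≤ max p 1 * b ^ (p - 1) * (b - a) := by
  have hb : 0 < b := ha.trans_le hab
  have hbp : b ^ p = b ^ (p - 1) * b := by rw [← rpow_add_one hb.ne', sub_add_cancel]
  rcases le_total p 1 with hp | hp
  · have : b ^ (p - 1) ≤ a ^ (p - 1) := rpow_le_rpow_of_nonpos ha hab (by linarith)
    have : a ^ p = a ^ (p - 1) * a := by rw [← rpow_add_one ha.ne', sub_add_cancel]
    rw [max_eq_right hp, one_mul]
    nlinarith [rpow_pos_of_pos hb (p - 1)]
  · have bernoulli : 1 + p * (a / b - 1) ≤ (a / b) ^ p := by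
      simpa using one_add_mul_self_le_rpow_one_add (s := a / b - 1)
        (by linarith [div_pos ha hb]) hp
    rw [div_rpow ha.le hb.le, le_div_iff₀ (rpow_pos_of_pos hb p)] at bernoulli
    rw [max_eq_left hp]
    have : b ^ p * (a / b) = b ^ (p - 1) * a := by rw [hbp]; field_simp
    nlinarith

theorem hasDerivAt_mul_rpow_sub_rpow_div {c p a x : ℝ} (hp : p ≠ 0) (hx : x ≠ 0) :
    HasDerivAt (fun y => c * (y ^ p - a ^ p) / p) (c * x ^ (p - 1)) x :=
  ((((hasDerivAt_rpow_const (p := p) (Or.inl hx)).sub_const (a ^ p)).const_mul c).div_const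
    p).congr_deriv (by field_simp)

theorem Icc_subset_dom {rp r : ℝ} {R : EReal} (hr : r ∈ dom rp R) : Icc rp r ⊆ dom rp R :=
  fun _ hx => ⟨hx.1, (EReal.coe_le_coe_iff.2 hx.2).trans_lt hr.2⟩

/-- `Ω²κ⁻²` in terms of the Vaidya mass `ϖ`. -/
def metricFactor (Λ r ϖ Q : ℝ) : ℝ := 1 - 2*ϖ/r + Q^2/r^2 + (-Λ/3)*r^2

def scalarKinetic (q0 r h κ φ φd : ℝ) : ℝ := r^2 * φd^2 + q0^2 * h^2 * κ^2 * r^2 * φ^2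

def vaidyaMassRHS (Λ α q0 r ϖ Q h κ φ φd : ℝ) : ℝ :=
  (-Λ/3) * α * r^2 * φ^2 / 2 + metricFactor Λ r ϖ Q * scalarKinetic q0 r h κ φ φd / 2
    + q0^2 * Q * r * h * κ * φ^2

def vaidyaSourceConst (rp Λ α q0 L : ℝ) : ℝ :=
  (-Λ/3) * |α| / 2 + ((1 + L/rp)^2 / rp^2 + (-Λ/3)) * (1 + 16 * q0^2 * L^2 / rp^2) / 2
    + 4 * q0^2 * L^2 / rp^3

theorem vaidyaSourceConst_pos {rp Λ α q0 L : ℝ} (hrp : 0 < rp) (hΛ : Λ < 0) (hα : α ≠ 0) :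
    0 < vaidyaSourceConst rp Λ α q0 L := by
  have hlam : 0 < -Λ/3 := by linarith
  have h1 : 0 < (-Λ/3) * |α| / 2 := div_pos (mul_pos hlam (abs_pos.2 hα)) two_pos
  have h2 : 0 ≤ ((1 + L/rp)^2 / rp^2 + (-Λ/3)) * (1 + 16 * q0^2 * L^2 / rp^2) / 2 := by
    have : 0 ≤ (1 + L/rp)^2 / rp^2 := by positivity
    exact div_nonneg (mul_nonneg (by linarith) (by positivity)) two_pos.le
  have h3 : 0 ≤ 4 * q0^2 * L^2 / rp^3 := by positivity
  unfold vaidyaSourceConst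
  linarith

section

variable {rp L M u Λ α q0 r ϖ Q h κ φ φd : ℝ}

theorem vaidyaMassRHS_eq_sub_mul (M : ℝ) (hr : r ≠ 0) :
    vaidyaMassRHS Λ α q0 r ϖ Q h κ φ φd
      = vaidyaMassRHS Λ α q0 r M Q h κ φ φd - r * (φd^2 + (q0 * h * κ * φ)^2) * (ϖ - M) := by
  unfold vaidyaMassRHS metricFactor scalarKinetic
  field_simp
  ring

theorem abs_metricFactor_le (hrp : 0 < rp) (hr : rp ≤ r) (hΛ : Λ ≤ 0) (hM : |M| ≤ L)
    (hQ : |Q| ≤ L) : |metricFactor Λ r M Q| ≤ ((1 + L/rp)^2 / rp^2 + (-Λ/3)) * r^2 := by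
  have hr0 : 0 < r := hrp.trans_le hr
  have hL : 0 ≤ L := (abs_nonneg M).trans hM
  have hMr : |2*M/r| ≤ 2*(L/rp) := by
    rw [abs_div, abs_mul, abs_two, abs_of_pos hr0, mul_div_assoc]
    gcongr
  have hQr : Q^2/r^2 ≤ (L/rp)^2 := by
    have hQ2 : Q^2 ≤ L^2 := by simpa using pow_le_pow_left₀ (abs_nonneg Q) hQ 2
    rw [div_pow]
    exact div_le_div₀ (sq_nonneg L) hQ2 (by positivity) (by gcongr)
  have hΛr : 0 ≤ (-Λ/3)*r^2 := mul_nonneg (by linarith) (sq_nonneg r)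
  calc |metricFactor Λ r M Q| ≤ (1 + L/rp)^2 + (-Λ/3)*r^2 := by
        have := abs_le.1 hMr
        have : 0 ≤ Q^2/r^2 := by positivity
        rw [metricFactor, abs_le]
        constructor <;> nlinarith
    _ ≤ (1 + L/rp)^2 * (r^2 / rp^2) + (-Λ/3)*r^2 := by
        gcongr
        exact le_mul_of_one_le_right (by positivity) ((one_le_div (by positivity)).2 (by gcongr))
    _ = ((1 + L/rp)^2 / rp^2 + (-Λ/3)) * r^2 := by ring

theorem sq_mul_abs_mul_le (hr : 0 < r) (hκ : |κ| ≤ 4) (hh : |h| ≤ L / r^2) :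
    r^2 * |h * κ| ≤ 4 * L := by
  rw [abs_mul]
  calc r^2 * (|h| * |κ|) ≤ r^2 * (L / r^2 * 4) := by gcongr; exact (abs_nonneg h).trans hh
    _ = 4 * L := by field_simp

theorem scalarKinetic_le (hrp : 0 < rp) (hr : rp ≤ r) (hκ : |κ| ≤ 4) (hh : |h| ≤ L / r^2)
    (hφ : |φ| ≤ u) (hφd : r * |φd| ≤ u) :
    scalarKinetic q0 r h κ φ φd ≤ (1 + 16 * q0^2 * L^2 / rp^2) * u^2 := by
  have hr0 : 0 < r := hrp.trans_le hr
  have hφ2 : φ^2 ≤ u^2 := by simpa using pow_le_pow_left₀ (abs_nonneg φ) hφ 2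
  have hφd2 : r^2 * φd^2 ≤ u^2 := by
    simpa [mul_pow, abs_of_pos hr0] using pow_le_pow_left₀ (by positivity) hφd 2
  have hhκ : (r^2 * |h * κ|)^2 ≤ (4 * L)^2 :=
    pow_le_pow_left₀ (by positivity) (sq_mul_abs_mul_le hr0 hκ hh) 2
  have : q0^2 * h^2 * κ^2 * r^2 * φ^2 ≤ 16 * q0^2 * L^2 / rp^2 * u^2 := by
    calc q0^2 * h^2 * κ^2 * r^2 * φ^2 = q0^2 * (r^2 * |h * κ|)^2 / r^2 * φ^2 := by
          rw [mul_pow, sq_abs]; field_simp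
      _ ≤ q0^2 * (4 * L)^2 / rp^2 * u^2 := by gcongr
      _ = 16 * q0^2 * L^2 / rp^2 * u^2 := by ring
  rw [scalarKinetic]
  linarith

theorem abs_vaidyaMassRHS_le (hrp : 0 < rp) (hr : rp ≤ r) (hΛ : Λ ≤ 0) (hM : |M| ≤ L)
    (hQ : |Q| ≤ L) (hκ : |κ| ≤ 4) (hh : |h| ≤ L / r^2) (hφ : |φ| ≤ u) (hφd : r * |φd| ≤ u) :
    |vaidyaMassRHS Λ α q0 r M Q h κ φ φd| ≤ vaidyaSourceConst rp Λ α q0 L * (r^2 * u^2) := by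
  have hr0 : 0 < r := hrp.trans_le hr
  have hL : 0 ≤ L := (abs_nonneg M).trans hM
  have hφ2 : φ^2 ≤ u^2 := by simpa using pow_le_pow_left₀ (abs_nonneg φ) hφ 2
  have hstatic : |(-Λ/3) * α * r^2 * φ^2 / 2| ≤ (-Λ/3) * |α| / 2 * (r^2 * u^2) := by
    rw [abs_div, abs_mul, abs_mul, abs_mul, abs_of_nonneg (by linarith : 0 ≤ -Λ/3), abs_two,
      abs_sq, abs_sq]
    calc (-Λ/3) * |α| * r^2 * φ^2 / 2 = (-Λ/3) * |α| / 2 * (r^2 * φ^2) := by ring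
      _ ≤ (-Λ/3) * |α| / 2 * (r^2 * u^2) :=
          mul_le_mul_of_nonneg_left (by gcongr) (by have := abs_nonneg α; nlinarith)
  have hcharge : |q0^2 * Q * r * h * κ * φ^2| ≤ 4 * q0^2 * L^2 / rp^3 * (r^2 * u^2) := by
    calc |q0^2 * Q * r * h * κ * φ^2| = q0^2 * |Q| * (r^2 * |h * κ|) * φ^2 / r := by
          simp only [abs_mul, abs_pow, sq_abs, abs_of_pos hr0]
          field_simp
      _ ≤ q0^2 * L * (4 * L) * u^2 / rp := by
          gcongr q0^2 * ?_ * ?_ * ?_ / ?_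
          exact sq_mul_abs_mul_le hr0 hκ hh
      _ ≤ q0^2 * L * (4 * L) * u^2 / rp * (r^2 / rp^2) :=
          le_mul_of_one_le_right (by positivity) ((one_le_div (by positivity)).2 (by gcongr))
      _ = 4 * q0^2 * L^2 / rp^3 * (r^2 * u^2) := by field_simp
  have hfactor := abs_metricFactor_le hrp hr hΛ hM hQ
  have hkin := scalarKinetic_le (q0 := q0) hrp hr hκ hh hφ hφd
  have hkin_nonneg : 0 ≤ scalarKinetic q0 r h κ φ φd := by unfold scalarKinetic; positivity
  have hmid : |metricFactor Λ r M Q * scalarKinetic q0 r h κ φ φd / 2|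
      = |metricFactor Λ r M Q| * scalarKinetic q0 r h κ φ φd / 2 := by
    rw [abs_div, abs_mul, abs_of_nonneg hkin_nonneg, abs_two]
  calc |vaidyaMassRHS Λ α q0 r M Q h κ φ φd|
      ≤ |(-Λ/3) * α * r^2 * φ^2 / 2| + |metricFactor Λ r M Q| * scalarKinetic q0 r h κ φ φd / 2
        + |q0^2 * Q * r * h * κ * φ^2| := (abs_add_three _ _ _).trans_eq (by rw [hmid])
    _ ≤ (-Λ/3) * |α| / 2 * (r^2 * u^2)
        + ((1 + L/rp)^2 / rp^2 + (-Λ/3)) * r^2 * ((1 + 16 * q0^2 * L^2 / rp^2) * u^2) / 2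
        + 4 * q0^2 * L^2 / rp^3 * (r^2 * u^2) := by
      gcongr
      exact (abs_nonneg _).trans hfactor
    _ = vaidyaSourceConst rp Λ α q0 L * (r^2 * u^2) := by unfold vaidyaSourceConst; ring

theorem abs_vaidyaMassRHS_le_rpow {Δ P : ℝ} (hrp : 0 < rp) (hr : rp ≤ r) (hΛ : Λ ≤ 0)
    (hM : |M| ≤ L) (hQ : |Q| ≤ L) (hκ : |κ| ≤ 4) (hh : |h| ≤ L / r^2)
    (hφ : |φ| ≤ P * r ^ (-(3:ℝ)/2 + Δ)) (hφd : |φd| ≤ P * r ^ (-(5:ℝ)/2 + Δ)) :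
    |vaidyaMassRHS Λ α q0 r M Q h κ φ φd|
      ≤ vaidyaSourceConst rp Λ α q0 L * P^2 * r ^ (2*Δ - 1) := by
  have hr0 : 0 < r := hrp.trans_le hr
  have hφd' : r * |φd| ≤ P * r ^ (-(3:ℝ)/2 + Δ) := by
    have : r * r ^ (-(5:ℝ)/2 + Δ) = r ^ (-(3:ℝ)/2 + Δ) := by
      rw [mul_comm, ← rpow_add_one hr0.ne']; ring_nf
    calc r * |φd| ≤ r * (P * r ^ (-(5:ℝ)/2 + Δ)) := by gcongr
      _ = P * r ^ (-(3:ℝ)/2 + Δ) := by rw [← this]; ring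
  have hpow : r^2 * (r ^ (-(3:ℝ)/2 + Δ))^2 = r ^ (2*Δ - 1) := by
    rw [← rpow_mul_natCast hr0.le, ← rpow_two, ← rpow_add hr0]; ring_nf
  calc _ ≤ vaidyaSourceConst rp Λ α q0 L * (r^2 * (P * r ^ (-(3:ℝ)/2 + Δ))^2) :=
        abs_vaidyaMassRHS_le hrp hr hΛ hM hQ hκ hh hφ hφd'
    _ = vaidyaSourceConst rp Λ α q0 L * P^2 * r ^ (2*Δ - 1) := by rw [← hpow]; ring

end

theorem stmt_5_general (rp Λ α Δ q0 L : ℝ) (hrp : 0 < rp) (hΛ : Λ < 0) (hα : α < 0)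
    (hΔ : Δ ∈ Ioo (0:ℝ) (3/2)) :
    ∃ C : ℝ, 0 < C ∧ ∀ (R : EReal), (rp : EReal) < R →
      ∀ (ε K M : ℝ), 0 < ε → 0 < K → K^2 * ε^2 ≤ 1 → |M| ≤ L →
      ∀ (ϖ ϖd κ κd φ φd Q h : ℝ → ℝ),
        (∀ r ∈ dom rp R, HasDerivWithinAt ϖ (ϖd r) (dom rp R) r) →
        ContinuousOn ϖd (dom rp R) →
        (∀ r ∈ dom rp R, HasDerivWithinAt κ (κd r) (dom rp R) r) →
        ContinuousOn κd (dom rp R) →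
        (∀ r ∈ dom rp R, HasDerivWithinAt φ (φd r) (dom rp R) r) →
        ContinuousOn φd (dom rp R) →
        ContinuousOn Q (dom rp R) →
        ContinuousOn h (dom rp R) →
        ϖ rp = M →
        (∀ r ∈ dom rp R, ϖd r =
          (-Λ/3) * α * r^2 * (φ r)^2 / 2
          + (1 - 2*ϖ r/r + (Q r)^2/r^2 + (-Λ/3)*r^2)
            * (r^2 * (φd r)^2 + q0^2 * (h r)^2 * (κ r)^2 * r^2 * (φ r)^2) / 2
          + q0^2 * Q r * r * h r * κ r * (φ r)^2) →
        (∀ r ∈ dom rp R, 1 ≤ κ r ∧ κ r ≤ 4) →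
        (∀ r ∈ dom rp R, |Q r| ≤ L) →
        (∀ r ∈ dom rp R, |φ r| ≤ K * ε * r ^ (-(3:ℝ)/2 + Δ)) →
        (∀ r ∈ dom rp R, |φd r| ≤ K * ε * r ^ (-(5:ℝ)/2 + Δ)) →
        (∀ r ∈ dom rp R, |h r| ≤ L / r^2) →
        ∀ r ∈ dom rp R, |ϖ r - M| ≤ C * K^2 * ε^2 * r ^ (2*Δ - 1) * (r - rp) := by
  have hΔ0 : 0 < Δ := hΔ.1
  set c := vaidyaSourceConst rp Λ α q0 L
  have hc : 0 < c := vaidyaSourceConst_pos hrp hΛ hα.ne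
  refine ⟨c * max (2*Δ) 1 / (2*Δ), by positivity, ?_⟩
  intro R _ ε K M _ _ _ hM ϖ ϖd κ _ φ φd Q h hϖ _ _ _ _ _ _ _ hϖrp hϖd hκ hQ hφ hφd hh r hr
  have hsub := Icc_subset_dom hr
  have hpos : ∀ x ∈ Ico rp r, 0 < x := fun x hx => hrp.trans_le hx.1
  have hF (x : ℝ) (hx : x ∈ Icc rp r) :=
    hasDerivAt_mul_rpow_sub_rpow_div (c := c * (K * ε)^2) (p := 2*Δ) (a := rp) (by positivity)
      (hrp.trans_le hx.1).ne'
  have hbound := abs_image_le_of_damped_deriv_right (ψ := fun x => ϖ x - M) (ψ' := ϖd)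
    (T := fun x => vaidyaMassRHS Λ α q0 x M (Q x) (h x) (κ x) (φ x) (φd x))
    (g := fun x => x * (φd x ^ 2 + (q0 * h x * κ x * φ x) ^ 2))
    (fun x hx => ((hϖ x (hsub hx)).continuousWithinAt.mono hsub).sub continuousWithinAt_const)
    (fun x hx => (((hϖ x (hsub (Ico_subset_Icc_self hx))).mono hsub).mono_of_mem_nhdsWithin
      (Icc_mem_nhdsGE_of_mem hx)).sub_const M)
    (fun x hx => (hF x hx).continuousAt.continuousWithinAt)
    (fun x hx => (hF x (Ico_subset_Icc_self hx)).hasDerivWithinAt) (by simp [hϖrp])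
    (fun x hx => (hϖd x (hsub (Ico_subset_Icc_self hx))).trans
      (vaidyaMassRHS_eq_sub_mul M (hpos x hx).ne'))
    (fun x hx => mul_nonneg (hpos x hx).le (by positivity))
    (fun x hx => by
      have hx' := hsub (Ico_subset_Icc_self hx)
      exact abs_vaidyaMassRHS_le_rpow hrp hx.1 hΛ.le hM (hQ x hx')
        (abs_le.2 ⟨by linarith [(hκ x hx').1], (hκ x hx').2⟩) (hh x hx') (hφ x hx') (hφd x hx'))
    ⟨hr.1, le_rfl⟩
  calc |ϖ r - M| ≤ c * (K * ε)^2 * (r ^ (2*Δ) - rp ^ (2*Δ)) / (2*Δ) := hbound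
    _ ≤ c * (K * ε)^2 * (max (2*Δ) 1 * r ^ (2*Δ - 1) * (r - rp)) / (2*Δ) := by
      gcongr
      exact rpow_sub_rpow_le_max_mul hrp hr.1
    _ = c * max (2*Δ) 1 / (2*Δ) * K^2 * ε^2 * r ^ (2*Δ - 1) * (r - rp) := by ring

theorem stmt_5 (rp Λ α Δ q0 L : ℝ) (hrp : 0 < rp) (hΛ : Λ < 0) (hα : α < 0)
    (hΔ : Δ ∈ Ioo (0:ℝ) (3/2)) (hL : 0 < L) :
    ∃ C : ℝ, 0 < C ∧ ∀ (R : EReal), (rp : EReal) < R →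
      ∀ (ε K M : ℝ), 0 < ε → 0 < K → K^2 * ε^2 ≤ 1 → |M| ≤ L →
      ∀ (ϖ ϖd κ κd φ φd Q h : ℝ → ℝ),
        (∀ r ∈ dom rp R, HasDerivWithinAt ϖ (ϖd r) (dom rp R) r) →
        ContinuousOn ϖd (dom rp R) →
        (∀ r ∈ dom rp R, HasDerivWithinAt κ (κd r) (dom rp R) r) →
        ContinuousOn κd (dom rp R) →
        (∀ r ∈ dom rp R, HasDerivWithinAt φ (φd r) (dom rp R) r) →
        ContinuousOn φd (dom rp R) →
        ContinuousOn Q (dom rp R) →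
        ContinuousOn h (dom rp R) →
        ϖ rp = M →
        (∀ r ∈ dom rp R, ϖd r =
          (-Λ/3) * α * r^2 * (φ r)^2 / 2
          + (1 - 2*ϖ r/r + (Q r)^2/r^2 + (-Λ/3)*r^2)
            * (r^2 * (φd r)^2 + q0^2 * (h r)^2 * (κ r)^2 * r^2 * (φ r)^2) / 2
          + q0^2 * Q r * r * h r * κ r * (φ r)^2) →
        (∀ r ∈ dom rp R, 1 ≤ κ r ∧ κ r ≤ 4) →
        (∀ r ∈ dom rp R, |Q r| ≤ L) →
        (∀ r ∈ dom rp R, |φ r| ≤ K * ε * r ^ (-(3:ℝ)/2 + Δ)) →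
        (∀ r ∈ dom rp R, |φd r| ≤ K * ε * r ^ (-(5:ℝ)/2 + Δ)) →
        (∀ r ∈ dom rp R, |h r| ≤ L / r^2) →
        ∀ r ∈ dom rp R, |ϖ r - M| ≤ C * K^2 * ε^2 * r ^ (2*Δ - 1) * (r - rp) :=
  stmt_5_general rp Λ α Δ q0 L hrp hΛ hα hΔ
end
end

section
/- Let Λ < 0, α, q₀ ∈ ℝ, and let I ⊆ (0, ∞) be an open interval. Suppose κ, ϖ, Q, A, φ ∈ C¹(I) with κ > 0 satisfy on I the equations: κ'/κ = r(φ')² + q₀² r κ² (A/Ω²)² φ²; ϖ' = (−Λ/3)α r²φ²/2 + (r²(φ')²/2)·Ω²κ⁻² + q₀²A²r²φ²/(2Ω²) + q₀² Q r (A/Ω²) κ φ²; and Q' = q₀² r² κ (A/Ω²) φ², where Ω²(r) := κ(r)²·(1 − 2ϖ(r)/r + Q(r)²/r² + (−Λ/3)r²) is assumed positive on I. Then for all r ∈ I, the identity −Ω²(r)κ(r)⁻¹·(d/dr)[r·Ω²(r)·κ(r)⁻¹] = −Ω²(r)·(1 − Q(r)²/r²) + r²·Ω²(r)·(Λ + (−Λ/3)·α·φ(r)²)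 holds. -/
open Real Set Filter

/-!
Because Ω²κ⁻² = 1 - μ with 1 - μ := 1 - 2ϖ/r + Q²/r² + (-Λ/3)r², the function r Ω²κ⁻¹ equals
κ · r(1 - μ), and (r(1 - μ))' = 1 - 2ϖ' - Q²/r² + 2QQ'/r - Λr². Multiplying by -Ω²κ⁻¹, the claim
reduces to the pointwise identity (κ'/κ) r(1 - μ) - 2ϖ' + 2QQ'/r = (Λ/3) α r²φ². In it the
φ'² terms of κ'/κ and ϖ' cancel, and so do the q₀²A² terms (using κ²(1 - μ) = Ω²) and the
q₀²QA terms of ϖ' and QQ'/r, leaving only the Klein–Gordon mass term.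
-/

noncomputable def oneMinusMu (Λ : ℝ) (ϖ Q : ℝ → ℝ) (r : ℝ) : ℝ :=
  1 - 2 * ϖ r / r + (Q r) ^ 2 / r ^ 2 + (-Λ / 3) * r ^ 2

theorem hasDerivAt_mul_oneMinusMu {Λ r ϖ' Q' : ℝ} {ϖ Q : ℝ → ℝ}
    (hϖ : HasDerivAt ϖ ϖ' r) (hQ : HasDerivAt Q Q' r) (hr : r ≠ 0) :
    HasDerivAt (fun s => s * oneMinusMu Λ ϖ Q s)
      (1 - 2 * ϖ' - (Q r) ^ 2 / r ^ 2 + 2 * Q r * Q' / r - Λ * r ^ 2) r := by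
  have hid : HasDerivAt (fun s : ℝ => s) 1 r := hasDerivAt_id r
  have hsq : HasDerivAt (fun s : ℝ => s ^ 2) (2 * r) r := by simpa using hasDerivAt_pow 2 r
  have hN : HasDerivAt (oneMinusMu Λ ϖ Q)
      (2 * (ϖ r - r * ϖ') / r ^ 2 + 2 * Q r * (r * Q' - Q r) / r ^ 3 - 2 * Λ / 3 * r) r :=
    ((((hasDerivAt_const r (1 : ℝ)).sub ((hϖ.const_mul 2).div hid hr)).add
      ((hQ.pow 2).div hsq (pow_ne_zero 2 hr))).add (hsq.const_mul (-Λ / 3))).congr_deriv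
      (by simp only [Pi.pow_apply]; field_simp; ring)
  refine (hid.mul hN).congr_deriv ?_
  simp only [oneMinusMu]
  field_simp
  ring

theorem radial_system_combination {Λ α q0 r κ κ' n Ω2 ϖ' Q Q' A φ φ' : ℝ}
    (hr : r ≠ 0) (hκ : κ ≠ 0) (hΩ : Ω2 ≠ 0) (hΩn : Ω2 = κ ^ 2 * n)
    (hκ' : κ' / κ = r * φ' ^ 2 + q0 ^ 2 * r * κ ^ 2 * (A / Ω2) ^ 2 * φ ^ 2)
    (hϖ' : ϖ' = (-Λ / 3) * α * r ^ 2 * φ ^ 2 / 2 + (r ^ 2 * φ' ^ 2 / 2) * (Ω2 / κ ^ 2)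
        + q0 ^ 2 * A ^ 2 * r ^ 2 * φ ^ 2 / (2 * Ω2) + q0 ^ 2 * Q * r * (A / Ω2) * κ * φ ^ 2)
    (hQ' : Q' = q0 ^ 2 * r ^ 2 * κ * (A / Ω2) * φ ^ 2) :
    κ' / κ * r * n - 2 * ϖ' + 2 * Q * Q' / r = Λ / 3 * α * r ^ 2 * φ ^ 2 := by
  rw [hκ', hϖ', hQ']
  subst hΩn
  have hn : n ≠ 0 := right_ne_zero_of_mul hΩ
  field_simp
  ring

theorem stmt_7_general (Λ α q0 : ℝ) (I : Set ℝ)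
    (hIsub : I ⊆ Ioi (0:ℝ))
    (κ ϖ Q A φ κd ϖd Qd φd : ℝ → ℝ)
    (hκ : ∀ r ∈ I, HasDerivAt κ (κd r) r)
    (hϖ : ∀ r ∈ I, HasDerivAt ϖ (ϖd r) r)
    (hQ : ∀ r ∈ I, HasDerivAt Q (Qd r) r)
    (hκpos : ∀ r ∈ I, 0 < κ r)
    (Ω2 : ℝ → ℝ)
    (hΩ2 : ∀ r, Ω2 r = (κ r)^2 * (1 - 2*ϖ r/r + (Q r)^2/r^2 + (-Λ/3)*r^2))
    (hΩpos : ∀ r ∈ I, 0 < Ω2 r)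
    (heq1 : ∀ r ∈ I, κd r / κ r =
        r*(φd r)^2 + q0^2*r*(κ r)^2*(A r/Ω2 r)^2*(φ r)^2)
    (heq2 : ∀ r ∈ I, ϖd r =
        (-Λ/3)*α*r^2*(φ r)^2/2 + (r^2*(φd r)^2/2)*(Ω2 r/(κ r)^2)
        + q0^2*(A r)^2*r^2*(φ r)^2/(2*Ω2 r)
        + q0^2*(Q r)*r*(A r/Ω2 r)*(κ r)*(φ r)^2)
    (heq3 : ∀ r ∈ I, Qd r = q0^2*r^2*(κ r)*(A r/Ω2 r)*(φ r)^2) :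
    ∀ r ∈ I, -(Ω2 r) * (κ r)⁻¹ * deriv (fun s => s * Ω2 s * (κ s)⁻¹) r
      = -(Ω2 r) * (1 - (Q r)^2/r^2) + r^2 * Ω2 r * (Λ + (-Λ/3)*α*(φ r)^2) := by
  intro r hr
  have hr0 : r ≠ 0 := (hIsub hr).ne'
  have hκ0 : κ r ≠ 0 := (hκpos r hr).ne'
  have hΩn (s : ℝ) : Ω2 s = κ s ^ 2 * oneMinusMu Λ ϖ Q s := hΩ2 s
  have hF : (fun s => s * Ω2 s * (κ s)⁻¹) = fun s => κ s * (s * oneMinusMu Λ ϖ Q s) :=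
    funext fun s => by
      rw [hΩn]
      linear_combination (s * oneMinusMu Λ ϖ Q s) * mul_self_mul_inv (κ s)
  have hd : HasDerivAt (fun s => κ s * (s * oneMinusMu Λ ϖ Q s)) _ r :=
    (hκ r hr).mul (hasDerivAt_mul_oneMinusMu (hϖ r hr) (hQ r hr) hr0)
  have key := radial_system_combination hr0 hκ0 (hΩpos r hr).ne' (hΩn r)
    (heq1 r hr) (heq2 r hr) (heq3 r hr)
  rw [hF, hd.deriv, mul_assoc, mul_add, ← mul_assoc (κ r)⁻¹ (κ r), inv_mul_cancel₀ hκ0, one_mul]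
  linear_combination (-Ω2 r) * key

theorem stmt_7 (Λ α q0 : ℝ) (hΛ : Λ < 0) (I : Set ℝ)
    (hIopen : IsOpen I) (hIconn : I.OrdConnected) (hIsub : I ⊆ Ioi (0:ℝ))
    (κ ϖ Q A φ κd ϖd Qd Ad φd : ℝ → ℝ)
    (hκ : ∀ r ∈ I, HasDerivAt κ (κd r) r) (hκc : ContinuousOn κd I)
    (hϖ : ∀ r ∈ I, HasDerivAt ϖ (ϖd r) r) (hϖc : ContinuousOn ϖd I)
    (hQ : ∀ r ∈ I, HasDerivAt Q (Qd r) r) (hQc : ContinuousOn Qd I)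
    (hA : ∀ r ∈ I, HasDerivAt A (Ad r) r) (hAc : ContinuousOn Ad I)
    (hφ : ∀ r ∈ I, HasDerivAt φ (φd r) r) (hφc : ContinuousOn φd I)
    (hκpos : ∀ r ∈ I, 0 < κ r)
    (Ω2 : ℝ → ℝ)
    (hΩ2 : ∀ r, Ω2 r = (κ r)^2 * (1 - 2*ϖ r/r + (Q r)^2/r^2 + (-Λ/3)*r^2))
    (hΩpos : ∀ r ∈ I, 0 < Ω2 r)
    (heq1 : ∀ r ∈ I, κd r / κ r =
        r*(φd r)^2 + q0^2*r*(κ r)^2*(A r/Ω2 r)^2*(φ r)^2)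
    (heq2 : ∀ r ∈ I, ϖd r =
        (-Λ/3)*α*r^2*(φ r)^2/2 + (r^2*(φd r)^2/2)*(Ω2 r/(κ r)^2)
        + q0^2*(A r)^2*r^2*(φ r)^2/(2*Ω2 r)
        + q0^2*(Q r)*r*(A r/Ω2 r)*(κ r)*(φ r)^2)
    (heq3 : ∀ r ∈ I, Qd r = q0^2*r^2*(κ r)*(A r/Ω2 r)*(φ r)^2) :
    ∀ r ∈ I, -(Ω2 r) * (κ r)⁻¹ * deriv (fun s => s * Ω2 s * (κ s)⁻¹) r
      = -(Ω2 r) * (1 - (Q r)^2/r^2) + r^2 * Ω2 r * (Λ + (-Λ/3)*α*(φ r)^2) :=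
  stmt_7_general Λ α q0 I hIsub κ ϖ Q A φ κd ϖd Qd φd hκ hϖ hQ hκpos Ω2 hΩ2 hΩpos heq1 heq2 heq3
end
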